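/- arXiv:2211.12463 — 2 statements merged into one kernel-verified Lean document; each statement's English description precedes it below -/
import Mathlib

section
/- Let V = (ℤ →₀ ℂ) × (ℤ →₀ ℂ) with the quadratic form Q(a, b) = Σ_{m ∈ ℤ} a_m b_m, let C = CliffordAlgebra(Q), and set ψ_m = ι(e_m, 0) and ψ*_n = ι(0, e_n) for m, n ∈ ℤ, where e_m denotes the standard basis vector and ι the canonical embedding of V into C. Then for all m, n, p, q ∈ ℤ the commutator identity [ψ_m ψ*_n, ψ_p ψ*_q] = δ_{n,p} ψ_m ψ*_q − δ_{q,m} ψ_p ψ*_n holds in C. (Hence E_{m,n} ↦ ψ_m ψ*_n is a Lie-associative map from the Lie algebra of finitely supported ℤ×ℤ matrices into the Clifford algebra.) -/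
/-- The underlying module V = (ℤ →₀ ℂ) × (ℤ →₀ ℂ). -/
abbrev V : Type := (ℤ →₀ ℂ) × (ℤ →₀ ℂ)

/-- The pairing (a, b) ↦ Σ_m a_m b_m on ℤ →₀ ℂ. -/
noncomputable def pairing : (ℤ →₀ ℂ) →ₗ[ℂ] (ℤ →₀ ℂ) →ₗ[ℂ] ℂ :=
  Finsupp.lsum ℂ fun m => LinearMap.toSpanSingleton ℂ ((ℤ →₀ ℂ) →ₗ[ℂ] ℂ) (Finsupp.lapply m)

/-- The quadratic form Q(a, b) = Σ_m a_m b_m on V. -/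
noncomputable def Q : QuadraticForm ℂ V :=
  LinearMap.BilinMap.toQuadraticMap
    (pairing.compl₁₂ (LinearMap.fst ℂ (ℤ →₀ ℂ) (ℤ →₀ ℂ)) (LinearMap.snd ℂ (ℤ →₀ ℂ) (ℤ →₀ ℂ)))

/-- The Clifford algebra of Q. -/
abbrev Cl : Type := CliffordAlgebra Q

/-- ψ_m = ι(e_m, 0). -/
noncomputable def psi (m : ℤ) : Cl :=
  CliffordAlgebra.ι Q ((Finsupp.single m 1, 0) : V)

/-- ψ*_n = ι(0, e_n). -/
noncomputable def psiStar (n : ℤ) : Cl :=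
  CliffordAlgebra.ι Q ((0, Finsupp.single n 1) : V)

lemma pairing_single (m n : ℤ) :
    pairing (Finsupp.single m 1) (Finsupp.single n 1) = if m = n then 1 else 0 := by
  simp [pairing, Finsupp.single_apply]
  exact if_congr eq_comm rfl rfl

lemma polar_eq (a b : V) : QuadraticMap.polar Q a b = pairing a.1 b.2 + pairing b.1 a.2 := by
  simp [Q, LinearMap.BilinMap.polar_toQuadraticMap]

lemma psi_anticomm (a b : ℤ) : psi a * psi b = -(psi b * psi a) := by
  have h := CliffordAlgebra.ι_mul_ι_add_swap (Q := Q)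
    ((Finsupp.single a 1, 0) : V) ((Finsupp.single b 1, 0) : V)
  rw [polar_eq] at h
  simp only [map_zero, LinearMap.zero_apply, add_zero, zero_add] at h
  rw [psi, psi]
  linear_combination (norm := noncomm_ring) h

lemma psiStar_anticomm (a b : ℤ) : psiStar a * psiStar b = -(psiStar b * psiStar a) := by
  have h := CliffordAlgebra.ι_mul_ι_add_swap (Q := Q)
    ((0, Finsupp.single a 1) : V) ((0, Finsupp.single b 1) : V)
  rw [polar_eq] at h
  simp only [map_zero, LinearMap.zero_apply, add_zero, zero_add] at h
  rw [psiStar, psiStar]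
  linear_combination (norm := noncomm_ring) h

lemma mixed (a b : ℤ) :
    psiStar b * psi a = algebraMap ℂ Cl (if a = b then 1 else 0) - psi a * psiStar b := by
  have h := CliffordAlgebra.ι_mul_ι_add_swap (Q := Q)
    ((Finsupp.single a 1, 0) : V) ((0, Finsupp.single b 1) : V)
  rw [polar_eq] at h
  simp only [map_zero, LinearMap.zero_apply, add_zero, zero_add] at h
  rw [pairing_single] at h
  rw [psi, psiStar]
  linear_combination (norm := noncomm_ring) h

theorem stmt9 (m n p q : ℤ) :
    (psi m * psiStar n) * (psi p * psiStar q) - (psi p * psiStar q) * (psi m * psiStar n)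
      = (if n = p then psi m * psiStar q else 0)
        - (if q = m then psi p * psiStar n else 0) := by
  set a := psi m; set b := psiStar n; set c := psi p; set d := psiStar q
  have h1 : a * c = -(c * a) := psi_anticomm m p
  have h2 : d * b = -(b * d) := psiStar_anticomm q n
  have h3 : b * c = algebraMap ℂ Cl (if p = n then 1 else 0) - c * b := mixed p n
  have h4 : d * a = algebraMap ℂ Cl (if m = q then 1 else 0) - a * d := mixed m q
  have e1 : a * b * (c * d) = a * (b * c) * d := by noncomm_ring
  have e2 : c * d * (a * b) = c * (d * a) * b := by noncomm_ring
  rw [e1, e2, h3, h4]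
  have key : a * (algebraMap ℂ Cl (if p = n then 1 else 0) - c * b) * d
      - c * (algebraMap ℂ Cl (if m = q then 1 else 0) - a * d) * b
      = algebraMap ℂ Cl (if p = n then 1 else 0) * (a * d)
        - algebraMap ℂ Cl (if m = q then 1 else 0) * (c * b)
        - (a * c) * (b * d) + (c * a) * (d * b) := by
    rw [mul_sub a, mul_sub c, ← Algebra.commutes ((if p = n then 1 else 0 : ℂ)) a,
      ← Algebra.commutes ((if m = q then 1 else 0 : ℂ)) c]
    noncomm_ring
  rw [key, h1, h2]
  have hif1 : algebraMap ℂ Cl (if p = n then 1 else 0) * (a * d)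
      = if n = p then a * d else 0 := by
    rcases eq_or_ne n p with h | h
    · subst h; simp
    · rw [if_neg (Ne.symm h), if_neg h, map_zero, zero_mul]
  have hif2 : algebraMap ℂ Cl (if m = q then 1 else 0) * (c * b)
      = if q = m then c * b else 0 := by
    rcases eq_or_ne q m with h | h
    · subst h; simp
    · rw [if_neg (Ne.symm h), if_neg h, map_zero, zero_mul]
  rw [hif1, hif2]
  noncomm_ring
end

section
/- Let V = (ℤ →₀ ℂ) × (ℤ →₀ ℂ) with quadratic form Q(a, b) = Σ_{m ∈ ℤ} a_m b_m, let C = CliffordAlgebra(Q), ψ_m = ι(e_m, 0), ψ*_n = ι(0, e_n). For m, n ∈ ℤ define σ(m,n) ∈ C by σ(m,n) = ψ_m ψ*_n if m ≠ n or m ≥ 0, and σ(n,n) = −ψ*_n ψ_n if n < 0. Then for all m, n, p, q ∈ ℤ, the identity [σ(m,n), σ(p,q)] = δ_{n,p} σ(m,q) − δ_{q,m} σ(p,n) + δ_{m,q} δ_{n,p} ( [m < 0 ∧ n ≥ 0] − [m ≥ 0 ∧ n < 0] ) · 1 holds in C, where [P] denotes 1 if the condition P holds and 0 otherwise. (That is,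 E_{m,n} ↦ σ(m,n), c ↦ 1 is a Lie-associative embedding of the central extension gl^c into the Clifford algebra.) -/
open Classical in
/-- σ(m,n): the normally ordered quadratic element of the Clifford algebra. -/
noncomputable def sigma (m n : ℤ) : Cl :=
  if m = n ∧ n < 0 then -(psiStar n * psi n) else psi m * psiStar n

lemma polar_Q (v w : V) :
    QuadraticMap.polar Q v w = pairing v.1 w.2 + pairing w.1 v.2 := by
  simp [Q, LinearMap.BilinMap.polar_toQuadraticMap]

open Classical in
lemma psiStar_mul_psi (n p : ℤ) :
    psiStar n * psi p = (if n = p then (1 : Cl) else 0) - psi p * psiStar n := by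
  have h := CliffordAlgebra.ι_mul_ι_add_swap (Q := Q)
    ((0, Finsupp.single n 1) : V) ((Finsupp.single p 1, 0) : V)
  rw [polar_Q] at h
  simp only [pairing_single, map_zero, LinearMap.zero_apply] at h
  have := eq_sub_of_add_eq h
  rw [psiStar, psi, this]
  by_cases hnp : n = p <;> simp [hnp, eq_comm, Algebra.algebraMap_eq_smul_one]

lemma psi_mul_psi (m p : ℤ) : psi m * psi p = -(psi p * psi m) := by
  have h := CliffordAlgebra.ι_mul_ι_add_swap (Q := Q)
    ((Finsupp.single m 1, 0) : V) ((Finsupp.single p 1, 0) : V)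
  rw [polar_Q] at h
  simp only [map_zero, LinearMap.map_zero, add_zero, zero_add] at h
  simp only [psi]
  exact eq_neg_of_add_eq_zero_left h

lemma psiStar_mul_psiStar (n q : ℤ) : psiStar n * psiStar q = -(psiStar q * psiStar n) := by
  have h := CliffordAlgebra.ι_mul_ι_add_swap (Q := Q)
    ((0, Finsupp.single n 1) : V) ((0, Finsupp.single q 1) : V)
  rw [polar_Q] at h
  simp only [map_zero, LinearMap.zero_apply, add_zero, zero_add] at h
  simp only [psiStar]
  exact eq_neg_of_add_eq_zero_left h

open Classical in
lemma sigma_eq (m n : ℤ) :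
    sigma m n = psi m * psiStar n - (if m = n ∧ n < 0 then (1 : Cl) else 0) := by
  rw [sigma]
  split_ifs with h
  · obtain ⟨h1, h2⟩ := h
    subst h1
    rw [psiStar_mul_psi]
    simp only [if_pos rfl]
    simp [h2]
  · simp

/-- Abstract commutator computation. -/
lemma key {R : Type*} [Ring R] (a b c d e₁ e₂ : R)
    (h1 : b * c = e₁ - c * b) (h2 : d * a = e₂ - a * d)
    (h3 : a * c = -(c * a)) (h4 : b * d = -(d * b))
    (hc1 : ∀ x, x * e₁ = e₁ * x) (hc2 : ∀ x, x * e₂ = e₂ * x) :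
    a * b * (c * d) - c * d * (a * b) = e₁ * (a * d) - e₂ * (c * b) := by
  have hq : a * (c * b) * d = c * (a * d) * b := by
    calc a * (c * b) * d = (a * c) * (b * d) := by noncomm_ring
      _ = (-(c * a)) * (-(d * b)) := by rw [h3, h4]
      _ = c * (a * d) * b := by noncomm_ring
  calc a * b * (c * d) - c * d * (a * b)
      = a * (b * c) * d - c * (d * a) * b := by noncomm_ring
    _ = a * (e₁ - c * b) * d - c * (e₂ - a * d) * b := by rw [h1, h2]
    _ = a * e₁ * d - a * (c * b) * d - (c * e₂ * b - c * (a * d) * b) := by noncomm_ring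
    _ = a * e₁ * d - c * e₂ * b := by rw [hq]; abel
    _ = e₁ * (a * d) - e₂ * (c * b) := by rw [hc1 a, hc2 c, mul_assoc, mul_assoc]

open Classical in
lemma tau_comm (m n p q : ℤ) :
    psi m * psiStar n * (psi p * psiStar q) - psi p * psiStar q * (psi m * psiStar n)
      = (if n = p then psi m * psiStar q else 0)
        - (if q = m then psi p * psiStar n else 0) := by
  have := key (psi m) (psiStar n) (psi p) (psiStar q)
    (if n = p then (1 : Cl) else 0) (if q = m then (1 : Cl) else 0)
    (psiStar_mul_psi n p) (psiStar_mul_psi q m) (psi_mul_psi m p) (psiStar_mul_psiStar n q)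
    (fun x => by split_ifs <;> simp) (fun x => by split_ifs <;> simp)
  rw [this]
  by_cases h1 : n = p <;> by_cases h2 : q = m <;> simp [h1, h2]

open Classical in
theorem stmt12 (m n p q : ℤ) :
    sigma m n * sigma p q - sigma p q * sigma m n
      = (if n = p then sigma m q else 0) - (if q = m then sigma p n else 0)
        + (if m = q ∧ n = p then
            (((if m < 0 ∧ 0 ≤ n then 1 else 0) - (if 0 ≤ m ∧ n < 0 then 1 else 0) : ℂ))
              • (1 : Cl)
          else 0) := by
  have hL : sigma m n * sigma p q - sigma p q * sigma m n
      = psi m * psiStar n * (psi p * psiStar q) - psi p * psiStar q * (psi m * psiStar n) := by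
    rw [sigma_eq m n, sigma_eq p q]
    split_ifs <;> noncomm_ring
  rw [hL, tau_comm, sigma_eq m q, sigma_eq p n]
  by_cases hnp : n = p <;> by_cases hqm : q = m
  · subst hnp; subst hqm
    simp only [if_pos rfl, if_pos (⟨rfl, rfl⟩ : q = q ∧ n = n), true_and,
      if_pos (⟨rfl, rfl⟩ : (q : ℤ) = q ∧ (n : ℤ) = n)]
    by_cases hq : q < 0 <;> by_cases hn : n < 0 <;>
      · simp [hq, hn, not_lt.mp, not_lt, not_le.mpr, sub_smul, one_smul, zero_smul]
        try abel
  · have hmq : ¬m = q := fun h => hqm h.symm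
    have h2 : ¬(m = q ∧ q < 0) := fun h => hmq h.1
    simp [hnp, hqm, hmq, h2]
  · subst hqm
    have hpn : ¬(p = n ∧ n < 0) := fun h => hnp h.1.symm
    simp [hnp, hpn]
  · have : ¬(m = q ∧ n = p) := fun h => hnp h.2
    simp [hnp, hqm, this]
end
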